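/- arXiv:0709.0142 — 5 statements merged into one kernel-verified Lean document; each statement's English description precedes it below -/
import Mathlib

section
/- For all integers n ≥ 0 and ℓ ≥ 0 there exist real coefficients b_0, …, b_ℓ with b_s = 0 whenever s and ℓ have different parity, such that ζ^{∘n}(J_z^ℓ) = Σ_{s=0}^{ℓ} b_s J_z^s. That is, ζ^{∘n}(J_z^ℓ) is a real polynomial in J_z of degree at most ℓ containing only powers of the same parity as ℓ. -/
open Matrix Complex Kronecker
open scoped ComplexOrder

noncomputable section

/-- spin value j = (d-1)/2 -/
def jr (d : ℕ) : ℝ := ((d : ℝ) - 1) / 2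

/-- λ = j(j+1) = (d²-1)/4 -/
def lam (d : ℕ) : ℝ := ((d : ℝ) ^ 2 - 1) / 4

/-- angular momentum operator J_z -/
def Jz (d : ℕ) : Matrix (Fin d) (Fin d) ℂ :=
  Matrix.diagonal (fun m => ((m : ℂ) - ((d : ℂ) - 1) / 2))

/-- raising operator J_+ -/
def Jp (d : ℕ) : Matrix (Fin d) (Fin d) ℂ :=
  Matrix.of (fun a b : Fin d =>
    if (a : ℕ) = (b : ℕ) + 1 then
      (Real.sqrt (((b : ℕ) + 1) * ((d : ℝ) - 1 - (b : ℕ))) : ℂ)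
    else 0)

/-- lowering operator J_- -/
def Jm (d : ℕ) : Matrix (Fin d) (Fin d) ℂ := (Jp d)ᴴ

/-- J_x -/
def Jx (d : ℕ) : Matrix (Fin d) (Fin d) ℂ := (2 : ℂ)⁻¹ • (Jp d + Jm d)

/-- J_y -/
def Jy (d : ℕ) : Matrix (Fin d) (Fin d) ℂ := (2 * Complex.I)⁻¹ • (Jp d - Jm d)

/-- the superoperator ζ -/
def zeta (d : ℕ) (X : Matrix (Fin d) (Fin d) ℂ) : Matrix (Fin d) (Fin d) ℂ :=
  ((lam d : ℂ))⁻¹ • (Jx d * X * Jx d + Jy d * X * Jy d + Jz d * X * Jz d)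

/-- n-fold composition ζ^∘n -/
def zetaIter (d : ℕ) (n : ℕ) (X : Matrix (Fin d) (Fin d) ℂ) : Matrix (Fin d) (Fin d) ℂ :=
  (zeta d)^[n] X

/-- rotation e^{-iθ J} -/
def rot (d : ℕ) (K : Matrix (Fin d) (Fin d) ℂ) (θ : ℝ) : Matrix (Fin d) (Fin d) ℂ :=
  NormedSpace.exp ((-Complex.I * (θ : ℂ)) • K)

/-- rotation covariance of a linear map with respect to all three generators -/
def RotCovariant (d : ℕ)
    (ξ : Matrix (Fin d) (Fin d) ℂ →ₗ[ℂ] Matrix (Fin d) (Fin d) ℂ) : Prop :=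
  ∀ K ∈ ({Jx d, Jy d, Jz d} : Set (Matrix (Fin d) (Fin d) ℂ)), ∀ (θ : ℝ),
    ∀ X : Matrix (Fin d) (Fin d) ℂ,
      ξ (rot d K θ * X * rot d K (-θ)) = rot d K θ * ξ X * rot d K (-θ)

/-- positivity of a map -/
def PosMap (d : ℕ)
    (ξ : Matrix (Fin d) (Fin d) ℂ →ₗ[ℂ] Matrix (Fin d) (Fin d) ℂ) : Prop :=
  ∀ X : Matrix (Fin d) (Fin d) ℂ, X.PosSemidef → (ξ X).PosSemidef

end

/-! Since `J_z` is diagonal with eigenvalues `x = m - j`, a real polynomial `p(J_z)` is the diagonal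
matrix of the values `p(x)`. The operators `J_±` shift these eigenvalues by `±1`, and
`J_∓ J_± = λ - J_z (J_z ± 1)`, so `ζ (p(J_z)) = q(J_z)` with
`2λ q(x) = (λ - x(x-1)) p(x-1) + (λ - x(x+1)) p(x+1) + 2 x² p(x)`;
no boundary terms appear because `λ - x(x ∓ 1)` vanishes at `x = ∓j`. The map `p ↦ q` commutes with
`x ↦ -x`, hence preserves parity, and `2λ q = λ (p(x-1) + p(x+1)) - x Δ²(x p)` shows that it raises
the degree by at most one. Parity then forbids the extra degree, so the polynomials of degree `≤ ℓ`
and parity `ℓ` form an invariant set containing `X ^ ℓ`. -/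

open Polynomial

namespace Polynomial

variable {R : Type*} [CommRing R]

theorem coeff_comp_neg_X (p : R[X]) (n : ℕ) :
    (p.comp (-X)).coeff n = (-1) ^ n * p.coeff n := by
  rw [show (-X : R[X]) = C (-1) * X by simp, comp_C_mul_X_coeff, mul_comm]

theorem coeff_eq_zero_of_comp_neg_X_eq [IsAddTorsionFree R] {p : R[X]} {ℓ s : ℕ}
    (hp : p.comp (-X) = (-1 : R) ^ ℓ • p) (hs : s % 2 ≠ ℓ % 2) : p.coeff s = 0 := by
  have h := congrArg (coeff · s) hp
  simp only [coeff_comp_neg_X, coeff_smul, smul_eq_mul] at h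
  obtain ⟨hs', hℓ⟩ | ⟨hs', hℓ⟩ : (Even s ∧ Odd ℓ) ∨ (Odd s ∧ Even ℓ) := by
    simp only [Nat.even_iff, Nat.odd_iff]; omega
  · rw [hs'.neg_one_pow, hℓ.neg_one_pow, one_mul, neg_one_mul] at h
    exact self_eq_neg.mp h
  · rw [hs'.neg_one_pow, hℓ.neg_one_pow, one_mul, neg_one_mul] at h
    exact self_eq_neg.mp h.symm

theorem taylor_comp_neg_X (r : R) (p : R[X]) :
    (taylor r p).comp (-X) = taylor (-r) (p.comp (-X)) := by
  simp only [taylor_apply, comp_assoc, add_comp, X_comp, C_comp, neg_comp, map_neg]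
  ring_nf

theorem natDegree_taylor_sub_le (r : R) (p : R[X]) :
    (taylor r p - p).natDegree ≤ p.natDegree - 1 := by
  rw [natDegree_le_iff_coeff_eq_zero]
  intro N hN
  rcases (show p.natDegree ≤ N by omega).eq_or_lt with rfl | hlt
  · rw [coeff_sub, coeff_taylor_natDegree, leadingCoeff, sub_self]
  · rw [coeff_sub, coeff_eq_zero_of_natDegree_lt hlt,
      coeff_eq_zero_of_natDegree_lt ((natDegree_taylor p r).trans_lt hlt), sub_zero]

end Polynomial

section ZetaPoly

variable {K : Type*} [Field K]

noncomputable def zetaPoly (c : K) (p : K[X]) : K[X] :=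
  C (2 * c)⁻¹ * ((C c - X * (X - 1)) * taylor (-1) p + (C c - X * (X + 1)) * taylor 1 p
    + 2 * X ^ 2 * p)

theorem zetaPoly_comp_neg_X {c : K} {p : K[X]} {ℓ : ℕ} (hp : p.comp (-X) = (-1 : K) ^ ℓ • p) :
    (zetaPoly c p).comp (-X) = (-1 : K) ^ ℓ • zetaPoly c p := by
  simp only [zetaPoly, mul_comp, add_comp, sub_comp, C_comp, X_comp, pow_comp, one_comp,
    ofNat_comp, taylor_comp_neg_X, hp, map_smul, neg_neg]
  simp only [smul_eq_C_mul]
  ring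

theorem natDegree_zetaPoly_le_succ {c : K} {p : K[X]} {ℓ : ℕ} (hp : p.natDegree ≤ ℓ) :
    (zetaPoly c p).natDegree ≤ ℓ + 1 := by
  have hsecondDiff : zetaPoly c p = C (2 * c)⁻¹ * (C c * (taylor (-1) p + taylor 1 p)
      - X * ((taylor (-1) (X * p) - X * p) + (taylor 1 (X * p) - X * p))) := by
    simp only [zetaPoly, taylor_mul, taylor_X, map_neg, map_one]
    ring
  have hXp : (X * p).natDegree - 1 ≤ ℓ := by
    have := natDegree_mul_le (p := (X : K[X])) (q := p)
    have := natDegree_X_le (R := K)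
    omega
  have hΔ : ∀ r : K, (taylor r (X * p) - X * p).natDegree ≤ ℓ :=
    fun r => (natDegree_taylor_sub_le r _).trans hXp
  have hsum : (C c * (taylor (-1) p + taylor 1 p)).natDegree ≤ ℓ :=
    (natDegree_C_mul_le _ _).trans (natDegree_add_le_of_degree_le
      ((natDegree_taylor p _).trans_le hp) ((natDegree_taylor p _).trans_le hp))
  have hdiff : (X * ((taylor (-1) (X * p) - X * p) + (taylor 1 (X * p) - X * p))).natDegree
      ≤ ℓ + 1 :=
    (natDegree_mul_le_of_le natDegree_X_le (natDegree_add_le_of_degree_le (hΔ _) (hΔ _))).trans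
      (by omega)
  rw [hsecondDiff]
  exact (natDegree_C_mul_le _ _).trans ((natDegree_sub_le _ _).trans (max_le (by omega) hdiff))

def IsParityPolyLE (ℓ : ℕ) (p : K[X]) : Prop :=
  p.natDegree ≤ ℓ ∧ p.comp (-X) = (-1 : K) ^ ℓ • p

theorem isParityPolyLE_X_pow (ℓ : ℕ) : IsParityPolyLE ℓ (X ^ ℓ : K[X]) :=
  ⟨natDegree_X_pow_le ℓ, by rw [X_pow_comp, neg_pow, smul_eq_C_mul, C_pow, C_neg, C_1]⟩

theorem IsParityPolyLE.zetaPoly [CharZero K] {ℓ : ℕ} {p : K[X]} (hp : IsParityPolyLE ℓ p)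
    (c : K) : IsParityPolyLE ℓ (zetaPoly c p) := by
  have hpar := zetaPoly_comp_neg_X (c := c) hp.2
  refine ⟨?_, hpar⟩
  rw [natDegree_le_iff_coeff_eq_zero]
  intro N hN
  rcases (show ℓ + 1 ≤ N by omega).eq_or_lt with rfl | hlt
  · exact coeff_eq_zero_of_comp_neg_X_eq hpar (by omega)
  · exact coeff_eq_zero_of_natDegree_lt ((natDegree_zetaPoly_le_succ hp.1).trans_lt hlt)

end ZetaPoly

section Spin

variable (d : ℕ)

noncomputable def jzEig (m : Fin d) : ℝ := m - jr d

theorem Jz_eq_diagonal : Jz d = diagonal (fun m => (jzEig d m : ℂ)) := by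
  simp [Jz, jzEig, jr]

theorem aeval_Jz (p : ℝ[X]) :
    aeval (Jz d) p = diagonal (fun m => ((p.eval (jzEig d m) : ℝ) : ℂ)) := by
  rw [Jz_eq_diagonal, ← diagonalAlgHom_apply ℝ, aeval_algHom_apply, aeval_pi_apply,
    diagonalAlgHom_apply]
  congr with m
  exact aeval_algebraMap_apply_eq_algebraMap_eval (A := ℂ) (jzEig d m) p

theorem Jp_mul_diagonal (F : ℝ → ℂ) :
    Jp d * diagonal (fun m => F (jzEig d m)) = diagonal (fun m => F (jzEig d m - 1)) * Jp d := by
  ext a l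
  simp only [mul_diagonal, diagonal_mul, Jp, of_apply]
  split_ifs with h
  · rw [mul_comm]; congr 2; simp only [jzEig, h, Nat.cast_add, Nat.cast_one]; ring
  · simp

theorem Jm_mul_diagonal (F : ℝ → ℂ) :
    Jm d * diagonal (fun m => F (jzEig d m)) = diagonal (fun m => F (jzEig d m + 1)) * Jm d := by
  ext a l
  simp only [mul_diagonal, diagonal_mul, Jm, conjTranspose_apply, Jp, of_apply]
  split_ifs with h
  · rw [mul_comm]; congr 2; simp only [jzEig, h, Nat.cast_add, Nat.cast_one]; ring
  · simp

theorem lam_sub_jzEig_mul_jzEig_add_one (m : Fin d) :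
    lam d - jzEig d m * (jzEig d m + 1) = ((m : ℝ) + 1) * ((d : ℝ) - 1 - m) := by
  simp only [lam, jzEig, jr]; ring

theorem lam_sub_jzEig_mul_jzEig_sub_one (m : Fin d) :
    lam d - jzEig d m * (jzEig d m - 1) = (m : ℝ) * ((d : ℝ) - m) := by
  simp only [lam, jzEig, jr]; ring

theorem Jp_weight_nonneg (m : Fin d) : 0 ≤ ((m : ℝ) + 1) * ((d : ℝ) - 1 - m) := by
  have : (m : ℝ) + 1 ≤ d := by exact_mod_cast m.isLt
  exact mul_nonneg (by positivity) (by linarith)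

theorem Jm_mul_Jp :
    Jm d * Jp d = diagonal (fun m => ((lam d - jzEig d m * (jzEig d m + 1) : ℝ) : ℂ)) := by
  ext a b
  rw [mul_apply, diagonal_apply, lam_sub_jzEig_mul_jzEig_add_one]
  simp only [Jm, conjTranspose_apply, Jp, of_apply]
  by_cases ha : (a : ℕ) + 1 < d
  · rw [Fintype.sum_eq_single ⟨a + 1, ha⟩ fun l hl => by
      rw [if_neg fun h => hl (Fin.ext h), star_zero, zero_mul]]
    rw [if_pos rfl]
    simp only [Nat.add_right_cancel_iff, ← Fin.ext_iff]
    split_ifs with hab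
    · subst hab
      rw [Complex.star_def, Complex.conj_ofReal, ← Complex.ofReal_mul,
        Real.mul_self_sqrt (Jp_weight_nonneg d a)]
    · rw [mul_zero]
  · have ha' : (a : ℝ) + 1 = d := by exact_mod_cast (by omega : (a : ℕ) + 1 = d)
    rw [Finset.sum_eq_zero fun l _ => by rw [if_neg (by omega), star_zero, zero_mul],
      show (d : ℝ) - 1 - a = 0 by linarith]
    simp

theorem Jp_mul_Jm :
    Jp d * Jm d = diagonal (fun m => ((lam d - jzEig d m * (jzEig d m - 1) : ℝ) : ℂ)) := by
  ext a b
  rw [mul_apply, diagonal_apply, lam_sub_jzEig_mul_jzEig_sub_one]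
  simp only [Jm, conjTranspose_apply, Jp, of_apply]
  obtain ha | ⟨k, hk⟩ : (a : ℕ) = 0 ∨ ∃ k, (a : ℕ) = k + 1 := by
    rcases (a : ℕ) with _ | k <;> simp
  · rw [Finset.sum_eq_zero fun l _ => by rw [if_neg (by omega), zero_mul]]
    simp [ha]
  · have hk' : k < d := by omega
    rw [Fintype.sum_eq_single ⟨k, hk'⟩ fun l hl => by
      rw [if_neg fun h => hl (Fin.ext (by simp only at h ⊢; omega)), zero_mul]]
    rw [if_pos hk]
    split_ifs with hb hab hab
    · rw [Complex.star_def, Complex.conj_ofReal, ← Complex.ofReal_mul,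
        Real.mul_self_sqrt (Jp_weight_nonneg d ⟨k, hk'⟩)]
      simp only [hk]
      push_cast
      ring
    · exact absurd (Fin.ext (by simp only at hb ⊢; omega)) hab
    · subst hab; exact absurd hk hb
    · rw [star_zero, mul_zero]

theorem Jx_mul_mul_Jx_add_Jy_mul_mul_Jy (A : Matrix (Fin d) (Fin d) ℂ) :
    Jx d * A * Jx d + Jy d * A * Jy d = (2 : ℂ)⁻¹ • (Jp d * A * Jm d + Jm d * A * Jp d) := by
  have hI : (2 * I)⁻¹ * (2 * I)⁻¹ = -(4 : ℂ)⁻¹ := by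
    rw [← mul_inv, mul_mul_mul_comm, I_mul_I]; norm_num
  simp only [Jx, Jy, smul_mul_assoc, mul_smul_comm, add_mul, mul_add, sub_mul, mul_sub, smul_add,
    smul_sub, smul_smul]
  match_scalars <;> rw [hI] <;> ring

theorem zeta_aeval_Jz (p : ℝ[X]) :
    zeta d (aeval (Jz d) p) = aeval (Jz d) (zetaPoly (lam d) p) := by
  rw [aeval_Jz, aeval_Jz, zeta, Jx_mul_mul_Jx_add_Jy_mul_mul_Jy,
    Jp_mul_diagonal d (fun x => ((p.eval x : ℝ) : ℂ)),
    Jm_mul_diagonal d (fun x => ((p.eval x : ℝ) : ℂ)),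
    mul_assoc, mul_assoc, Jp_mul_Jm, Jm_mul_Jp, Jz_eq_diagonal]
  simp only [diagonal_mul_diagonal, diagonal_add, ← diagonal_smul]
  congr with m
  simp only [zetaPoly, taylor_eval, ← sub_eq_add_neg, Pi.smul_apply, smul_eq_mul, eval_mul,
    eval_C, eval_add, eval_sub, eval_X, eval_one, eval_ofNat, eval_pow]
  push_cast
  ring

end Spin

theorem stmt_3_general (d : ℕ) (n ℓ : ℕ) :
    ∃ b : ℕ → ℝ,
      (∀ s : ℕ, s % 2 ≠ ℓ % 2 → b s = 0) ∧
      zetaIter d n ((Jz d) ^ ℓ) =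
        ∑ s ∈ Finset.range (ℓ + 1), (b s : ℂ) • (Jz d) ^ s := by
  have hq : IsParityPolyLE ℓ ((zetaPoly (lam d))^[n] (X ^ ℓ)) :=
    Function.Iterate.rec (IsParityPolyLE ℓ) (isParityPolyLE_X_pow ℓ)
      (fun _ hp => hp.zetaPoly (lam d)) n
  refine ⟨((zetaPoly (lam d))^[n] (X ^ ℓ)).coeff,
    fun s hs => coeff_eq_zero_of_comp_neg_X_eq hq.2 hs, ?_⟩
  have hJz : Jz d ^ ℓ = aeval (Jz d) (X ^ ℓ : ℝ[X]) := by simp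
  rw [hJz, zetaIter, ← Function.Semiconj.iterate_right (fun p => (zeta_aeval_Jz d p).symm) n,
    aeval_eq_sum_range' (Nat.lt_succ_of_le hq.1)]
  simp only [Complex.coe_smul]

theorem stmt_3 (d : ℕ) (hd : 2 ≤ d) (n ℓ : ℕ) :
    ∃ b : ℕ → ℝ,
      (∀ s : ℕ, s % 2 ≠ ℓ % 2 → b s = 0) ∧
      zetaIter d n ((Jz d) ^ ℓ) =
        ∑ s ∈ Finset.range (ℓ + 1), (b s : ℂ) • (Jz d) ^ s :=
  stmt_3_general d n ℓ
end

section
/- For every integer ℓ ≥ 1, ζ(J_z^ℓ) = ζ(J_z^{ℓ−1}) J_z + G(ℓ), where G(ℓ) = (i/λ)(J_x J_z^{ℓ−1} J_y − J_y J_z^{ℓ−1} J_x). -/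
open Matrix Complex Kronecker
open scoped ComplexOrder

/-- G(ℓ) = (i/λ)(J_x J_z^{ℓ-1} J_y − J_y J_z^{ℓ-1} J_x) -/
noncomputable def Gmap (d : ℕ) (ℓ : ℕ) : Matrix (Fin d) (Fin d) ℂ :=
  (Complex.I / (lam d : ℂ)) •
    (Jx d * (Jz d) ^ (ℓ - 1) * Jy d - Jy d * (Jz d) ^ (ℓ - 1) * Jx d)

/-! Moving the right factor `J_z` of `X J_z` through the outer factors of `J_x (X J_z) J_x` and
`J_y (X J_z) J_y` costs the commutators `[J_z, J_x] = i J_y` and `[J_z, J_y] = -i J_x`; these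
produce exactly `G(ℓ)` for `X = J_z^(ℓ-1)`. -/

theorem sum_sandwich_mul_right {R : Type*} [Ring R] [Algebra ℂ R] {A B Z : R}
    (hA : Z * A = A * Z + I • B) (hB : Z * B = B * Z - I • A) (X : R) :
    A * (X * Z) * A + B * (X * Z) * B + Z * (X * Z) * Z =
      (A * X * A + B * X * B + Z * X * Z) * Z + I • (A * X * B - B * X * A) := by
  calc A * (X * Z) * A + B * (X * Z) * B + Z * (X * Z) * Z
      = A * X * (Z * A) + B * X * (Z * B) + Z * X * Z * Z := by noncomm_ring
    _ = _ := by
      rw [hA, hB]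
      simp only [mul_add, mul_sub, mul_smul_comm, add_mul, smul_sub, ← mul_assoc]
      abel

lemma Jz_mul_Jp (d : ℕ) : Jz d * Jp d = Jp d * Jz d + Jp d := by
  ext a b
  by_cases h : (a : ℕ) = (b : ℕ) + 1
  · simp only [Jz, Jp, diagonal_mul, mul_diagonal, Matrix.add_apply, of_apply, h, if_true]
    push_cast
    ring
  · simp [Jz, Jp, h]

lemma Jz_isHermitian (d : ℕ) : (Jz d).IsHermitian := by
  simp [IsHermitian, Jz, diagonal_conjTranspose]

lemma Jz_mul_Jm (d : ℕ) : Jz d * Jm d = Jm d * Jz d - Jm d := by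
  have h := congrArg conjTranspose (Jz_mul_Jp d)
  simp only [conjTranspose_mul, conjTranspose_add, (Jz_isHermitian d).eq] at h
  rw [Jm, h, add_sub_cancel_right]

lemma Jz_mul_Jx (d : ℕ) : Jz d * Jx d = Jx d * Jz d + I • Jy d := by
  have hI : I * (2 * I)⁻¹ = 2⁻¹ := by field_simp
  rw [Jx, Jy, Matrix.mul_smul, Matrix.smul_mul, mul_add, add_mul, Jz_mul_Jp, Jz_mul_Jm,
    smul_smul, hI]
  module

lemma Jz_mul_Jy (d : ℕ) : Jz d * Jy d = Jy d * Jz d - I • Jx d := by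
  have hI : I * 2⁻¹ = (2 * I)⁻¹ * -1 := by rw [mul_inv, inv_I]; ring
  rw [Jx, Jy, Matrix.mul_smul, Matrix.smul_mul, mul_sub, sub_mul, Jz_mul_Jp, Jz_mul_Jm,
    smul_smul, hI]
  module

lemma zeta_mul_Jz (d : ℕ) (X : Matrix (Fin d) (Fin d) ℂ) :
    zeta d (X * Jz d) = zeta d X * Jz d +
      (I / (lam d : ℂ)) • (Jx d * X * Jy d - Jy d * X * Jx d) := by
  rw [zeta, zeta, sum_sandwich_mul_right (Jz_mul_Jx d) (Jz_mul_Jy d), smul_add, smul_mul_assoc,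
    smul_smul, div_eq_inv_mul]

theorem stmt_4_general (d : ℕ) (ℓ : ℕ) (hℓ : 1 ≤ ℓ) :
    zeta d ((Jz d) ^ ℓ) = zeta d ((Jz d) ^ (ℓ - 1)) * Jz d + Gmap d ℓ := by
  obtain ⟨k, rfl⟩ := Nat.exists_eq_add_of_le' hℓ
  rw [pow_succ, Nat.add_sub_cancel, zeta_mul_Jz, Gmap, Nat.add_sub_cancel]

theorem stmt_4 (d : ℕ) (hd : 2 ≤ d) (ℓ : ℕ) (hℓ : 1 ≤ ℓ) :
    zeta d ((Jz d) ^ ℓ) = zeta d ((Jz d) ^ (ℓ - 1)) * Jz d + Gmap d ℓ :=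
  stmt_4_general d ℓ hℓ
end

section
/- Let S = Σ_{k∈{x,y,z}} conj(J_k) ⊗ J_k acting on ℂ^d ⊗ ℂ^d, where conj denotes the entrywise complex conjugate. Then the d matrices S⁰ = I, S, S², …, S^{d−1} are linearly independent over ℂ. -/
open Matrix Complex Kronecker
open scoped ComplexOrder

/-! Since the matrix elements of `J₊` and `J_z` are real, `conj J_x = J_x`, `conj J_y = -J_y`,
`conj J_z = J_z`, and `S = ½ (J₊ ⊗ J₊ + J₋ ⊗ J₋) + J_z ⊗ J_z`. Each of `J₊, J₋, J_z` moves `e_c`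
to multiples of `e_{c-1}, e_c, e_{c+1}`, so `S^k (e₀ ⊗ e₀)` lives on `e_a ⊗ e_b` with `a, b ≤ k`,
and its `e_k ⊗ e_k` coefficient is a product of the nonzero squares `(J₊)_{c+1,c}²`. Reading
`S^k (e₀ ⊗ e₀)` off on the vectors `e_n ⊗ e_n` therefore gives a triangular matrix with nonzero
diagonal, so already these `d` vectors are linearly independent. -/

theorem Matrix.linearIndependent_rows_of_isLowerTriangular {m R : Type*} [Fintype m]
    [DecidableEq m] [LinearOrder m] [CommRing R] [IsDomain R] {A : Matrix m m R}
    (hA : A.IsLowerTriangular) (hdiag : ∀ i, A i i ≠ 0) :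
    LinearIndependent R (fun i ↦ A i) :=
  linearIndependent_rows_of_det_ne_zero <| by
    rw [det_of_isLowerTriangular A hA]
    exact Finset.prod_ne_zero_iff.mpr fun i _ ↦ hdiag i

noncomputable def spinCoupling (d : ℕ) : Matrix (Fin d × Fin d) (Fin d × Fin d) ℂ :=
  (Jx d).map (starRingEnd ℂ) ⊗ₖ Jx d + (Jy d).map (starRingEnd ℂ) ⊗ₖ Jy d
    + (Jz d).map (starRingEnd ℂ) ⊗ₖ Jz d

section

variable {d : ℕ}

lemma Jp_apply_of_ne {a b : Fin d} (h : (a : ℕ) ≠ b + 1) : Jp d a b = 0 := by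
  simp [Jp, h]

lemma Jp_apply_of_eq {a b : Fin d} (h : (a : ℕ) = b + 1) :
    Jp d a b = (Real.sqrt (((b : ℕ) + 1) * ((d : ℝ) - 1 - (b : ℕ))) : ℂ) := by
  simp [Jp, h]

lemma conj_Jp_apply (a b : Fin d) : starRingEnd ℂ (Jp d a b) = Jp d a b := by
  by_cases h : (a : ℕ) = b + 1
  · rw [Jp_apply_of_eq h, conj_ofReal]
  · rw [Jp_apply_of_ne h, map_zero]

lemma Jz_apply_of_ne {a b : Fin d} (h : a ≠ b) : Jz d a b = 0 :=
  diagonal_apply_ne _ h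

lemma conj_Jz_apply (a b : Fin d) : starRingEnd ℂ (Jz d a b) = Jz d a b := by
  by_cases h : a = b
  · subst h; simp [Jz, map_ofNat]
  · rw [Jz_apply_of_ne h, map_zero]

lemma Jm_apply (a b : Fin d) : Jm d a b = Jp d b a := by
  rw [Jm, conjTranspose_apply, ← starRingEnd_apply, conj_Jp_apply]

lemma Jx_apply (a b : Fin d) : Jx d a b = 2⁻¹ * (Jp d a b + Jp d b a) := by
  simp [Jx, Jm_apply]

lemma Jy_apply (a b : Fin d) : Jy d a b = (2 * I)⁻¹ * (Jp d a b - Jp d b a) := by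
  simp [Jy, Jm_apply]

lemma spinCoupling_apply (a b c c' : Fin d) :
    spinCoupling d (a, b) (c, c') =
      2⁻¹ * (Jp d a c * Jp d b c' + Jp d c a * Jp d c' b) + Jz d a c * Jz d b c' := by
  simp only [spinCoupling, Matrix.add_apply, kroneckerMap_apply, Matrix.map_apply, Jx_apply,
    Jy_apply, _root_.map_mul, map_add, map_sub, map_inv₀, conj_Jp_apply, conj_Jz_apply,
    map_ofNat, conj_I]
  field_simp
  ring_nf
  rw [I_sq]
  ring

lemma spinCoupling_apply_eq_zero {a b c c' : Fin d} (h : (c : ℕ) + 1 < a ∨ (c' : ℕ) + 1 < b) :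
    spinCoupling d (a, b) (c, c') = 0 := by
  have hJp : Jp d a c * Jp d b c' = 0 := by
    rcases h with h | h
    · rw [Jp_apply_of_ne (a := a) (by omega), zero_mul]
    · rw [Jp_apply_of_ne (a := b) (by omega), mul_zero]
  have hJm : Jp d c a * Jp d c' b = 0 := by
    rcases h with h | h
    · rw [Jp_apply_of_ne (b := a) (by omega), zero_mul]
    · rw [Jp_apply_of_ne (b := b) (by omega), mul_zero]
  have hJz : Jz d a c * Jz d b c' = 0 := by
    rcases h with h | h
    · rw [Jz_apply_of_ne (a := a) (by omega), zero_mul]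
    · rw [Jz_apply_of_ne (a := b) (by omega), mul_zero]
  rw [spinCoupling_apply, hJp, hJm, hJz]
  ring

lemma spinCoupling_apply_succ_diag_ne_zero {a c : Fin d} (h : (a : ℕ) = c + 1) :
    spinCoupling d (a, a) (c, c) ≠ 0 := by
  have hc : (c : ℝ) + 2 ≤ d := by exact_mod_cast (show (c : ℕ) + 2 ≤ d by omega)
  have hpos : (0 : ℝ) < ((c : ℕ) + 1) * ((d : ℝ) - 1 - (c : ℕ)) := by nlinarith
  rw [spinCoupling_apply, Jp_apply_of_eq h, Jp_apply_of_ne (by omega),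
    Jz_apply_of_ne (Fin.ne_of_val_ne (by omega)), ← ofReal_mul,
    Real.mul_self_sqrt hpos.le]
  simp only [mul_zero, add_zero]
  exact mul_ne_zero (by norm_num) (ofReal_ne_zero.mpr hpos.ne')

variable [NeZero d]

lemma spinCoupling_pow_apply_eq_zero (k : ℕ) {a b : Fin d} (h : k < a ∨ k < b) :
    (spinCoupling d ^ k) (a, b) (0, 0) = 0 := by
  induction k generalizing a b with
  | zero =>
    apply one_apply_ne
    rintro ⟨⟩
    simp at h
  | succ k ih =>
    rw [pow_succ', mul_apply]
    refine Finset.sum_eq_zero fun ⟨c, c'⟩ _ => ?_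
    by_cases hc : k < c ∨ k < c'
    · rw [ih hc, mul_zero]
    · rw [spinCoupling_apply_eq_zero (by omega), zero_mul]

lemma spinCoupling_pow_apply_succ_diag {a c : Fin d} (h : (a : ℕ) = c + 1) :
    (spinCoupling d ^ (a : ℕ)) (a, a) (0, 0) =
      spinCoupling d (a, a) (c, c) * (spinCoupling d ^ (c : ℕ)) (c, c) (0, 0) := by
  rw [h, pow_succ', mul_apply, Finset.sum_eq_single (c, c)]
  · rintro ⟨b, b'⟩ - hb
    by_cases hlt : c < b ∨ c < b'
    · rw [spinCoupling_pow_apply_eq_zero _ hlt, mul_zero]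
    · have : b ≠ c ∨ b' ≠ c := by
        by_contra! hbc
        exact hb (Prod.ext hbc.1 hbc.2)
      rw [spinCoupling_apply_eq_zero (by omega), zero_mul]
  · simp

lemma spinCoupling_pow_apply_diag_ne_zero (a : Fin d) :
    (spinCoupling d ^ (a : ℕ)) (a, a) (0, 0) ≠ 0 := by
  obtain ⟨k, hk⟩ := a
  induction k with
  | zero =>
    rw [show (⟨0, hk⟩ : Fin d) = 0 from rfl]
    simp
  | succ k ih =>
    rw [spinCoupling_pow_apply_succ_diag (c := ⟨k, by omega⟩) rfl]
    exact mul_ne_zero (spinCoupling_apply_succ_diag_ne_zero rfl) (ih (by omega))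

end

theorem stmt_13_general (d : ℕ) :
    LinearIndependent ℂ (fun k : Fin d =>
      ((Jx d).map (starRingEnd ℂ) ⊗ₖ Jx d + (Jy d).map (starRingEnd ℂ) ⊗ₖ Jy d
        + (Jz d).map (starRingEnd ℂ) ⊗ₖ Jz d) ^ (k : ℕ)) := by
  rcases d.eq_zero_or_pos with rfl | hd
  · exact linearIndependent_empty_type
  have : NeZero d := ⟨hd.ne'⟩
  let diagCol : Matrix (Fin d × Fin d) (Fin d × Fin d) ℂ →ₗ[ℂ] Fin d → ℂ :=
    LinearMap.pi fun n => entryLinearMap ℂ ℂ (n, n) (0, 0)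
  refine .of_comp diagCol (linearIndependent_rows_of_isLowerTriangular
    (A := of fun k n : Fin d => (spinCoupling d ^ (k : ℕ)) (n, n) (0, 0)) ?_ ?_)
  · exact fun k n hkn => spinCoupling_pow_apply_eq_zero _ (.inl hkn)
  · exact fun k => spinCoupling_pow_apply_diag_ne_zero k

theorem stmt_13 (d : ℕ) (hd : 2 ≤ d) :
    LinearIndependent ℂ (fun k : Fin d =>
      ((Jx d).map (starRingEnd ℂ) ⊗ₖ Jx d + (Jy d).map (starRingEnd ℂ) ⊗ₖ Jy d
        + (Jz d).map (starRingEnd ℂ) ⊗ₖ Jz d) ^ (k : ℕ)) :=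
  stmt_13_general d
end

section
/- Let P = e_{d−1} e_{d−1}† be the rank-one projector onto the highest-weight state |j,j⟩. Then for every integer n with 0 ≤ n < d−1, the (0,0) entry of ζ^{∘n}(P) (i.e., its matrix element on the lowest-weight state |j,−j⟩) equals 0, while the (0,0) entry of ζ^{∘(d−1)}(P) is a strictly positive real number. -/
open Matrix Complex Kronecker
open scoped ComplexOrder

/-!
In the `J_z` eigenbasis, `J_x`, `J_y`, `J_z` are tridiagonal, so `ζ` lowers the support of a
matrix by at most one index: `ζ^[n] P` lives on indices `≥ d - 1 - n`. On the new corner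
`(c - 1, c - 1)` only the term `J_- X J_+` of `ζ X` survives, and it multiplies the old corner
entry `X c c` by `|⟨c|J_+|c - 1⟩|² / (2λ) = c (d - c) / (2λ) > 0`.
-/
section Band

variable {R : Type*} {d : ℕ}

def IsTridiagonal [Zero R] (A : Matrix (Fin d) (Fin d) R) : Prop :=
  ∀ a b : Fin d, (b : ℕ) + 1 < a ∨ (a : ℕ) + 1 < b → A a b = 0

def SupportedFrom [Zero R] (t : ℕ) (X : Matrix (Fin d) (Fin d) R) : Prop :=
  ∀ a b : Fin d, (a : ℕ) < t ∨ (b : ℕ) < t → X a b = 0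

theorem IsTridiagonal.add [AddZeroClass R] {A B : Matrix (Fin d) (Fin d) R}
    (hA : IsTridiagonal A) (hB : IsTridiagonal B) : IsTridiagonal (A + B) := fun a b h => by
  rw [Matrix.add_apply, hA a b h, hB a b h, add_zero]

theorem IsTridiagonal.sub [SubNegZeroMonoid R] {A B : Matrix (Fin d) (Fin d) R}
    (hA : IsTridiagonal A) (hB : IsTridiagonal B) : IsTridiagonal (A - B) := fun a b h => by
  rw [Matrix.sub_apply, hA a b h, hB a b h, sub_zero]

theorem IsTridiagonal.smul {S : Type*} [Zero R] [SMulZeroClass S R]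
    {A : Matrix (Fin d) (Fin d) R} (c : S) (hA : IsTridiagonal A) : IsTridiagonal (c • A) :=
  fun a b h => by rw [Matrix.smul_apply, hA a b h, smul_zero]

theorem IsTridiagonal.conjTranspose [AddMonoid R] [StarAddMonoid R]
    {A : Matrix (Fin d) (Fin d) R} (hA : IsTridiagonal A) : IsTridiagonal Aᴴ := fun a b h => by
  rw [conjTranspose_apply, hA b a h.symm, star_zero]

theorem isTridiagonal_diagonal [Zero R] (v : Fin d → R) : IsTridiagonal (diagonal v) :=
  fun a b h => diagonal_apply_ne v (fun hab => by subst hab; omega)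

theorem SupportedFrom.add [AddZeroClass R] {t : ℕ} {X Y : Matrix (Fin d) (Fin d) R}
    (hX : SupportedFrom t X) (hY : SupportedFrom t Y) : SupportedFrom t (X + Y) :=
  fun a b h => by rw [Matrix.add_apply, hX a b h, hY a b h, add_zero]

theorem SupportedFrom.smul {S : Type*} [Zero R] [SMulZeroClass S R] {t : ℕ}
    {X : Matrix (Fin d) (Fin d) R} (c : S) (hX : SupportedFrom t X) : SupportedFrom t (c • X) :=
  fun a b h => by rw [Matrix.smul_apply, hX a b h, smul_zero]

theorem supportedFrom_single [Zero R] (i : Fin d) (c : R) : SupportedFrom i (single i i c) :=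
  fun a b h => single_apply_of_ne _ _ _ _ _ (by rintro ⟨rfl, rfl⟩; omega)

variable [Semiring R] {A B X : Matrix (Fin d) (Fin d) R}

theorem SupportedFrom.tridiagonal_mul_mul {t : ℕ} (hX : SupportedFrom t X)
    (hA : IsTridiagonal A) (hB : IsTridiagonal B) : SupportedFrom (t - 1) (A * X * B) := by
  intro a b hab
  simp only [mul_apply, Finset.sum_mul]
  refine Finset.sum_eq_zero fun b' _ => Finset.sum_eq_zero fun a' _ => ?_
  by_cases hsupp : (a' : ℕ) < t ∨ (b' : ℕ) < t
  · rw [hX a' b' hsupp, mul_zero, zero_mul]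
  · rcases hab with ha | hb
    · rw [hA a a' (by omega), zero_mul, zero_mul]
    · rw [hB b' b (by omega), mul_zero]

theorem SupportedFrom.tridiagonal_mul_apply {a c : Fin d} (hX : SupportedFrom c X)
    (hA : IsTridiagonal A) (hc : (c : ℕ) = a + 1) (b : Fin d) :
    (A * X) a b = A a c * X c b := by
  refine (mul_apply ..).trans (Fintype.sum_eq_single c fun a' ha' => ?_)
  rcases lt_or_gt_of_ne (Fin.val_ne_of_ne ha') with h | h
  · rw [hX a' b (Or.inl h), mul_zero]
  · rw [hA a a' (by omega), zero_mul]

theorem SupportedFrom.tridiagonal_mul_mul_apply {a c : Fin d} (hX : SupportedFrom c X)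
    (hA : IsTridiagonal A) (hB : IsTridiagonal B) (hc : (c : ℕ) = a + 1) :
    (A * X * B) a a = A a c * X c c * B c a := by
  simp only [mul_apply (M := A * X), hX.tridiagonal_mul_apply hA hc]
  refine Fintype.sum_eq_single c fun b' hb' => ?_
  rcases lt_or_gt_of_ne (Fin.val_ne_of_ne hb') with h | h
  · rw [hX c b' (Or.inr h), mul_zero, zero_mul]
  · rw [hB b' a (by omega), mul_zero]

end Band

section Spin

variable {d : ℕ}

theorem isTridiagonal_Jp : IsTridiagonal (Jp d) :=
  fun a b h => if_neg (by omega)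

theorem isTridiagonal_Jx : IsTridiagonal (Jx d) :=
  (isTridiagonal_Jp.add isTridiagonal_Jp.conjTranspose).smul _

theorem isTridiagonal_Jy : IsTridiagonal (Jy d) :=
  (isTridiagonal_Jp.sub isTridiagonal_Jp.conjTranspose).smul _

theorem isTridiagonal_Jz : IsTridiagonal (Jz d) :=
  isTridiagonal_diagonal _

theorem Jp_apply_subdiag {a c : Fin d} (hc : (c : ℕ) = a + 1) :
    Jp d c a = (√((c : ℝ) * (d - c)) : ℂ) := by
  rw [Jp, of_apply, if_pos hc, hc]
  push_cast
  ring_nf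

theorem Jm_apply_superdiag {a c : Fin d} (hc : (c : ℕ) = a + 1) :
    Jm d a c = (√((c : ℝ) * (d - c)) : ℂ) := by
  rw [Jm, conjTranspose_apply, Jp_apply_subdiag hc, Complex.star_def, Complex.conj_ofReal]

theorem Jp_apply_superdiag {a c : Fin d} (hc : (c : ℕ) = a + 1) : Jp d a c = 0 :=
  if_neg (by omega)

theorem Jm_apply_subdiag {a c : Fin d} (hc : (c : ℕ) = a + 1) : Jm d c a = 0 := by
  rw [Jm, conjTranspose_apply, Jp_apply_superdiag hc, star_zero]

theorem supportedFrom_zeta {t : ℕ} {X : Matrix (Fin d) (Fin d) ℂ} (hX : SupportedFrom t X) :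
    SupportedFrom (t - 1) (zeta d X) :=
  (((hX.tridiagonal_mul_mul isTridiagonal_Jx isTridiagonal_Jx).add
    (hX.tridiagonal_mul_mul isTridiagonal_Jy isTridiagonal_Jy)).add
    (hX.tridiagonal_mul_mul isTridiagonal_Jz isTridiagonal_Jz)).smul _

theorem zeta_apply_of_supportedFrom {a c : Fin d} {X : Matrix (Fin d) (Fin d) ℂ}
    (hX : SupportedFrom c X) (hc : (c : ℕ) = a + 1) :
    zeta d X a a = (((lam d)⁻¹ * 2⁻¹ * ((c : ℝ) * (d - c)) : ℝ) : ℂ) * X c c := by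
  have hsq : (√((c : ℝ) * (d - c)) : ℂ) * √((c : ℝ) * (d - c)) = (c : ℂ) * (d - c) := by
    rw [← Complex.ofReal_mul, Real.mul_self_sqrt]
    · push_cast; rfl
    have : (c : ℝ) < d := by exact_mod_cast c.isLt
    nlinarith
  have hJz : Jz d a c = 0 := diagonal_apply_ne _ fun h => by rw [h] at hc; omega
  rw [zeta, Matrix.smul_apply, Matrix.add_apply, Matrix.add_apply,
    hX.tridiagonal_mul_mul_apply isTridiagonal_Jx isTridiagonal_Jx hc,
    hX.tridiagonal_mul_mul_apply isTridiagonal_Jy isTridiagonal_Jy hc,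
    hX.tridiagonal_mul_mul_apply isTridiagonal_Jz isTridiagonal_Jz hc, hJz]
  simp only [Jx, Jy, Matrix.smul_apply, Matrix.add_apply, Matrix.sub_apply, smul_eq_mul,
    Jp_apply_subdiag hc, Jm_apply_superdiag hc, Jp_apply_superdiag hc, Jm_apply_subdiag hc]
  rw [mul_inv, Complex.inv_I]
  push_cast
  linear_combination (lam d : ℂ)⁻¹ * X c c *
    (2⁻¹ * hsq - (√((c : ℝ) * (d - c)) : ℂ) ^ 2 / 4 * Complex.I_sq)

theorem zeta_apply_pos_of_supportedFrom {a c : Fin d} {X : Matrix (Fin d) (Fin d) ℂ}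
    (hX : SupportedFrom c X) (hc : (c : ℕ) = a + 1) (hpos : 0 < X c c) : 0 < zeta d X a a := by
  have hcd : (c : ℝ) < d := by exact_mod_cast c.isLt
  have hc1 : (1 : ℝ) ≤ c := by exact_mod_cast hc ▸ Nat.le_add_left 1 a
  have hlam : 0 < lam d := by unfold lam; nlinarith
  rw [zeta_apply_of_supportedFrom hX hc]
  refine mul_pos (Complex.zero_lt_real.2 ?_) hpos
  have : 0 < (d : ℝ) - c := by linarith
  positivity

theorem supportedFrom_zetaIter {t : ℕ} {X : Matrix (Fin d) (Fin d) ℂ} (hX : SupportedFrom t X)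
    (n : ℕ) : SupportedFrom (t - n) (zetaIter d n X) := by
  induction n with
  | zero => exact hX
  | succ n ih =>
    rw [zetaIter, Function.iterate_succ_apply', Nat.sub_succ]
    exact supportedFrom_zeta ih

theorem zetaIter_apply_pos {t : ℕ} (ht : t < d) {X : Matrix (Fin d) (Fin d) ℂ}
    (hX : SupportedFrom t X) (hpos : 0 < X ⟨t, ht⟩ ⟨t, ht⟩) {n : ℕ} (hn : n ≤ t) :
    0 < zetaIter d n X ⟨t - n, by omega⟩ ⟨t - n, by omega⟩ := by
  induction n with
  | zero => exact hpos
  | succ n ih =>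
    rw [zetaIter, Function.iterate_succ_apply']
    exact zeta_apply_pos_of_supportedFrom (c := ⟨t - n, by omega⟩) (supportedFrom_zetaIter hX n)
      (by simp only; omega) (ih (by omega))

end Spin

theorem stmt_15 (d : ℕ) (hd : 2 ≤ d) :
    (∀ n : ℕ, n < d - 1 →
      zetaIter d n (Matrix.single (⟨d - 1, by omega⟩ : Fin d)
          (⟨d - 1, by omega⟩ : Fin d) (1 : ℂ))
        (⟨0, by omega⟩ : Fin d) (⟨0, by omega⟩ : Fin d) = 0) ∧
    (∃ r : ℝ, 0 < r ∧
      zetaIter d (d - 1) (Matrix.single (⟨d - 1, by omega⟩ : Fin d)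
          (⟨d - 1, by omega⟩ : Fin d) (1 : ℂ))
        (⟨0, by omega⟩ : Fin d) (⟨0, by omega⟩ : Fin d) = (r : ℂ)) := by
  have hP := supportedFrom_single (⟨d - 1, by omega⟩ : Fin d) (1 : ℂ)
  refine ⟨fun n hn => supportedFrom_zetaIter hP n _ _ (Or.inl (by simp only; omega)), ?_⟩
  have hpos := zetaIter_apply_pos (by omega) hP (by rw [single_apply_same]; exact one_pos) le_rfl
  simp only [Nat.sub_self] at hpos
  obtain ⟨r, hr, hr_eq⟩ := RCLike.pos_iff_exists_ofReal.1 hpos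
  exact ⟨r, hr, hr_eq.symm⟩
end

section
/- For every d×d complex matrix ρ with Tr ρ = 1, the probability of correctly identifying a known spin-½ state using the total-angular-momentum measurement satisfies ½ ( Tr[Π_+ (ρ ⊗ e_1 e_1†)] + Tr[Π_− (ρ ⊗ e_0 e_0†)] ) = ½ + Tr[ρ J_z]/(2j+1), where e_1, e_0 ∈ ℂ² are the spin-up (K_z = +½) and spin-down (K_z = −½) basis vectors. -/
open Matrix Complex Kronecker
open scoped ComplexOrder

/-- total angular momentum squared 𝒥² on ℂ^d ⊗ ℂ² -/
noncomputable def J2half (d : ℕ) : Matrix (Fin d × Fin 2) (Fin d × Fin 2) ℂ :=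
  (Jx d ⊗ₖ (1 : Matrix (Fin 2) (Fin 2) ℂ) + (1 : Matrix (Fin d) (Fin d) ℂ) ⊗ₖ Jx 2) ^ 2
  + (Jy d ⊗ₖ (1 : Matrix (Fin 2) (Fin 2) ℂ) + (1 : Matrix (Fin d) (Fin d) ℂ) ⊗ₖ Jy 2) ^ 2
  + (Jz d ⊗ₖ (1 : Matrix (Fin 2) (Fin 2) ℂ) + (1 : Matrix (Fin d) (Fin d) ℂ) ⊗ₖ Jz 2) ^ 2

/-- projector onto total angular momentum j + 1/2 -/
noncomputable def PiPlus (d : ℕ) : Matrix (Fin d × Fin 2) (Fin d × Fin 2) ℂ :=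
  ((2 * jr d + 1 : ℝ) : ℂ)⁻¹ •
    (J2half d - (((jr d - 1 / 2) * (jr d + 1 / 2) : ℝ) : ℂ) •
      (1 : Matrix (Fin d × Fin 2) (Fin d × Fin 2) ℂ))

/-- projector onto total angular momentum j - 1/2 -/
noncomputable def PiMinus (d : ℕ) : Matrix (Fin d × Fin 2) (Fin d × Fin 2) ℂ :=
  1 - PiPlus d

/-!
Expanding the square, `𝒥² = J² ⊗ 1 + 1 ⊗ K² + 2 ∑ₖ Jₖ ⊗ Kₖ`. Tested against `ρ ⊗ eᵢeᵢ†`, the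
Casimir identities `J² = λ` and `K² = 3/4` handle the first two terms, and of the cross terms only
`J_z ⊗ K_z` survives because `K_x`, `K_y` have zero diagonal. Hence
`Tr[Π₊(ρ ⊗ eᵢeᵢ†)] = ((j + 1) Tr ρ + 2 (K_z)ᵢᵢ Tr[ρ J_z]) / (2j + 1)`, and in
`Tr[Π₊(ρ ⊗ e₁e₁†)] + Tr ρ - Tr[Π₊(ρ ⊗ e₀e₀†)]` the `j + 1` terms cancel.
-/

theorem Matrix.trace_kroneckerSum_sq_mul_kronecker_single {m n R : Type*} [Fintype m]
    [Fintype n] [DecidableEq m] [DecidableEq n] [CommSemiring R]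
    (A ρ : Matrix m m R) (B : Matrix n n R) (i : n) :
    trace ((A ⊗ₖ (1 : Matrix n n R) + (1 : Matrix m m R) ⊗ₖ B) ^ 2 * (ρ ⊗ₖ single i i 1)) =
      trace (A * A * ρ) + 2 * B i i * trace (A * ρ) + (B * B) i i * trace ρ := by
  simp only [sq, add_mul, mul_add, trace_add, ← mul_kronecker_mul, one_mul, mul_one,
    trace_kronecker, trace_mul_single, trace_single_eq_same, MulOpposite.op_one, one_smul]
  ring

namespace Spin

variable (d : ℕ)

theorem Jm_apply (a b : Fin d) :
    Jm d a b = if (b : ℕ) = a + 1 then (√((a + 1) * (d - 1 - a) : ℝ) : ℂ) else 0 := by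
  simp only [Jm, conjTranspose_apply, Jp, of_apply]
  split_ifs <;> simp

theorem sqrt_mul_self_cast {m : ℕ} (hm : m < d) :
    (√((m + 1) * (d - 1 - m) : ℝ) : ℂ) * (√((m + 1) * (d - 1 - m) : ℝ) : ℂ) =
      ((m : ℂ) + 1) * (d - 1 - m) := by
  have hmd : (m : ℝ) + 1 ≤ d := by exact_mod_cast hm
  rw [← ofReal_mul, Real.mul_self_sqrt (by nlinarith)]
  push_cast
  ring

theorem Jp_mul_Jm : Jp d * Jm d = diagonal fun a : Fin d => (a : ℂ) * (d - a) := by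
  ext ⟨a, ha⟩ b
  rw [mul_apply, diagonal_apply]
  rcases a with _ | m
  · simp [Jp]
  · have hm : m < d := by omega
    rw [Finset.sum_eq_single ⟨m, hm⟩ (fun c _ hc => ?_) (by simp)]
    · by_cases hab : (⟨m + 1, ha⟩ : Fin d) = b
      · subst hab
        simp only [Jp, Jm_apply, of_apply, if_true, sqrt_mul_self_cast d hm]
        push_cast
        ring
      · have hb : (b : ℕ) ≠ m + 1 := fun h => hab (Fin.ext h.symm)
        simp [Jm_apply, hb, hab]
    · have : m ≠ c := fun h => hc (Fin.ext h.symm)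
      simp [Jp, this]

theorem Jm_mul_Jp : Jm d * Jp d = diagonal fun a : Fin d => ((a : ℂ) + 1) * (d - 1 - a) := by
  ext a b
  rw [mul_apply, diagonal_apply]
  by_cases ha : (a : ℕ) + 1 < d
  · rw [Finset.sum_eq_single ⟨a + 1, ha⟩ (fun c _ hc => ?_) (by simp)]
    · by_cases hab : a = b
      · subst hab
        simp [Jp, Jm_apply, sqrt_mul_self_cast d a.2]
      · have hb : (a : ℕ) ≠ b := fun h => hab (Fin.ext h)
        simp [Jp, hb, hab]
    · have : (c : ℕ) ≠ a + 1 := fun h => hc (Fin.ext h)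
      simp [Jm_apply, this]
  · have hd : (d : ℂ) = a + 1 := by norm_cast; omega
    rw [Finset.sum_eq_zero fun c _ => ?_]
    · simp [hd]
    · have : (c : ℕ) ≠ a + 1 := by omega
      simp [Jm_apply, this]

theorem Jx_mul_Jx_add_Jy_mul_Jy :
    Jx d * Jx d + Jy d * Jy d = (2 : ℂ)⁻¹ • (Jp d * Jm d + Jm d * Jp d) := by
  simp only [Jx, Jy, Matrix.smul_mul, Matrix.mul_smul, add_mul, mul_add, sub_mul, mul_sub]
  match_scalars
  all_goals simp only [mul_inv, inv_I]; ring_nf; simp only [I_sq]; norm_num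

theorem Jx_mul_Jx_add_Jy_mul_Jy_add_Jz_mul_Jz :
    Jx d * Jx d + Jy d * Jy d + Jz d * Jz d = (lam d : ℂ) • 1 := by
  rw [Jx_mul_Jx_add_Jy_mul_Jy, Jp_mul_Jm, Jm_mul_Jp, Jz, diagonal_mul_diagonal]
  ext a b
  rcases eq_or_ne a b with rfl | hab
  · simp only [Matrix.add_apply, Matrix.smul_apply, diagonal_apply_eq, one_apply_eq,
      smul_eq_mul, lam]
    push_cast
    ring
  · simp [hab]

theorem Jx_apply_self (a : Fin d) : Jx d a a = 0 := by
  simp [Jx, Jp, Jm_apply]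

theorem Jy_apply_self (a : Fin d) : Jy d a a = 0 := by
  simp [Jy, Jp, Jm_apply]

theorem trace_J2half_mul_kronecker_single (ρ : Matrix (Fin d) (Fin d) ℂ) (i : Fin 2) :
    trace (J2half d * (ρ ⊗ₖ single i i 1)) =
      (lam d + lam 2 : ℂ) * trace ρ + 2 * Jz 2 i i * trace (ρ * Jz d) := by
  have hJ : trace (Jx d * Jx d * ρ) + trace (Jy d * Jy d * ρ) + trace (Jz d * Jz d * ρ) =
      lam d * trace ρ := by
    rw [← trace_add, ← trace_add, ← add_mul, ← add_mul, Jx_mul_Jx_add_Jy_mul_Jy_add_Jz_mul_Jz,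
      smul_mul, one_mul, trace_smul, smul_eq_mul]
  have hK : (Jx 2 * Jx 2) i i + (Jy 2 * Jy 2) i i + (Jz 2 * Jz 2) i i = lam 2 := by
    simpa using congrFun (congrFun (Jx_mul_Jx_add_Jy_mul_Jy_add_Jz_mul_Jz 2) i) i
  rw [J2half, add_mul, add_mul, trace_add, trace_add, trace_kroneckerSum_sq_mul_kronecker_single,
    trace_kroneckerSum_sq_mul_kronecker_single, trace_kroneckerSum_sq_mul_kronecker_single,
    Jx_apply_self, Jy_apply_self, trace_mul_comm ρ]
  linear_combination hJ + trace ρ * hK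

/- The coefficient of `trace ρ` is `λ_d + 3/4 - (j - 1/2)(j + 1/2) = j + 1`. -/
theorem trace_PiPlus_mul_kronecker_single (ρ : Matrix (Fin d) (Fin d) ℂ) (i : Fin 2) :
    trace (PiPlus d * (ρ ⊗ₖ single i i 1)) =
      ((2 * jr d + 1 : ℝ) : ℂ)⁻¹ *
        ((jr d + 1 : ℝ) * trace ρ + 2 * Jz 2 i i * trace (ρ * Jz d)) := by
  rw [PiPlus, smul_mul, trace_smul, sub_mul, trace_sub, smul_mul, one_mul, trace_smul,
    trace_kronecker, trace_single_eq_same, trace_J2half_mul_kronecker_single, smul_eq_mul,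
    smul_eq_mul]
  push_cast [lam, jr]
  ring

end Spin

theorem stmt_16_general (d : ℕ)
    (ρ : Matrix (Fin d) (Fin d) ℂ) (hρ : Matrix.trace ρ = 1) :
    (2 : ℂ)⁻¹ *
      (Matrix.trace (PiPlus d * (ρ ⊗ₖ Matrix.single (1 : Fin 2) (1 : Fin 2) (1 : ℂ)))
       + Matrix.trace (PiMinus d * (ρ ⊗ₖ Matrix.single (0 : Fin 2) (0 : Fin 2) (1 : ℂ))))
    = 1 / 2 + Matrix.trace (ρ * Jz d) / ((2 * jr d + 1 : ℝ) : ℂ) := by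
  have hup : Jz 2 1 1 = 1 / 2 := by norm_num [Jz]
  have hdown : Jz 2 0 0 = -1 / 2 := by norm_num [Jz]
  rw [PiMinus, sub_mul, one_mul, trace_sub, trace_kronecker, trace_single_eq_same,
    Spin.trace_PiPlus_mul_kronecker_single, Spin.trace_PiPlus_mul_kronecker_single,
    hup, hdown, hρ]
  ring

theorem stmt_16 (d : ℕ) (hd : 2 ≤ d)
    (ρ : Matrix (Fin d) (Fin d) ℂ) (hρ : Matrix.trace ρ = 1) :
    (2 : ℂ)⁻¹ *
      (Matrix.trace (PiPlus d * (ρ ⊗ₖ Matrix.single (1 : Fin 2) (1 : Fin 2) (1 : ℂ)))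
       + Matrix.trace (PiMinus d * (ρ ⊗ₖ Matrix.single (0 : Fin 2) (0 : Fin 2) (1 : ℂ))))
    = 1 / 2 + Matrix.trace (ρ * Jz d) / ((2 * jr d + 1 : ℝ) : ℂ) :=
  stmt_16_general d ρ hρ
end
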